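/- arXiv:1709.04712 — 2 statements merged into one kernel-verified Lean document; each statement's English description precedes it below -/
import Mathlib

section
/- Let 0 ≤ l < k ≤ n, n ≥ 3, let a = (a_1,…,a_n) with 0 < a_1 ≤ … ≤ a_n, a ∈ Γ⁺, σ_k(a) = σ_l(a) and m_{k,l}(a) > 2, and let β ≥ 1. Then the initial value problem ψ(r)^k + ξ̄_k(a)·r·ψ(r)^{k−1}ψ′(r) − ψ(r)^l − ξ̲_l(a)·r·ψ(r)^{l−1}ψ′(r) = 0 for r > 1, ψ(1) = β, has a unique smooth solution ψ(·,β) on [1,+∞). This solution satisfies 1 ≤ ψ(r,β) ≤ β and ∂_r ψ(r,β) ≤ 0 for all r ≥ 1; moreover ψ(r,1) ≡ 1, and if β > 1 then 1 < ψ(r,β) < β for all r > 1. -/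
open Finset Filter MeasureTheory Set Topology

noncomputable def esymm (n : ℕ) (k : ℤ) (a : Fin n → ℝ) : ℝ :=
  if 0 ≤ k then
    ∑ s ∈ Finset.powersetCard k.toNat (Finset.univ : Finset (Fin n)), ∏ i ∈ s, a i
  else 0

noncomputable def esymmDel (n : ℕ) (k : ℤ) (i : Fin n) (a : Fin n → ℝ) : ℝ :=
  if 0 ≤ k then
    ∑ s ∈ Finset.powersetCard k.toNat ((Finset.univ : Finset (Fin n)).erase i),
      ∏ j ∈ s, a j
  else 0

noncomputable def esymmDel2 (n : ℕ) (k : ℤ) (i j : Fin n) (a : Fin n → ℝ) : ℝ :=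
  if 0 ≤ k then
    ∑ s ∈ Finset.powersetCard k.toNat
        (((Finset.univ : Finset (Fin n)).erase i).erase j),
      ∏ t ∈ s, a t
  else 0

noncomputable def Xi (n : ℕ) (k : ℤ) (a x : Fin n → ℝ) : ℝ :=
  (∑ i, esymmDel n (k - 1) i a * a i ^ 2 * x i ^ 2) /
    (esymm n k a * ∑ i, a i * x i ^ 2)

noncomputable def xiSup (n : ℕ) (k : ℤ) (a : Fin n → ℝ) : ℝ :=
  sSup {y | ∃ x : Fin n → ℝ, x ≠ 0 ∧ Xi n k a x = y}

noncomputable def xiInf (n : ℕ) (k : ℤ) (a : Fin n → ℝ) : ℝ :=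
  sInf {y | ∃ x : Fin n → ℝ, x ≠ 0 ∧ Xi n k a x = y}

noncomputable def mkl (n : ℕ) (k l : ℤ) (a : Fin n → ℝ) : ℝ :=
  ((k : ℝ) - (l : ℝ)) / (xiSup n k a - xiInf n l a)

def GammaK (n : ℕ) (k : ℤ) : Set (Fin n → ℝ) :=
  {lam | ∀ j : ℤ, 1 ≤ j → j ≤ k → 0 < esymm n j lam}

noncomputable def hessian (n : ℕ) (f : (Fin n → ℝ) → ℝ) (x : Fin n → ℝ) :
    Matrix (Fin n) (Fin n) ℝ :=
  fun i j => fderiv ℝ (fun y => fderiv ℝ f y (Pi.single j 1)) x (Pi.single i 1)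

def IsViscSubsol (n : ℕ) (k l : ℤ) (Ω : Set (Fin n → ℝ)) (u : (Fin n → ℝ) → ℝ) : Prop :=
  ∀ v : (Fin n → ℝ) → ℝ, ContDiffOn ℝ 2 v Ω →
    ∀ x₀ ∈ Ω, (∀ x ∈ Ω, u x ≤ v x) → v x₀ = u x₀ →
      ∀ hH : (hessian n v x₀).IsHermitian,
        esymm n l hH.eigenvalues ≤ esymm n k hH.eigenvalues

def IsViscSupersol (n : ℕ) (k l : ℤ) (Ω : Set (Fin n → ℝ)) (u : (Fin n → ℝ) → ℝ) : Prop :=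
  ∀ v : (Fin n → ℝ) → ℝ, ContDiffOn ℝ 2 v Ω →
    (∀ x ∈ Ω, ∀ hH : (hessian n v x).IsHermitian,
      hH.eigenvalues ∈ closure (GammaK n k)) →
    ∀ x₀ ∈ Ω, (∀ x ∈ Ω, v x ≤ u x) → v x₀ = u x₀ →
      ∀ hH : (hessian n v x₀).IsHermitian,
        esymm n k hH.eigenvalues ≤ esymm n l hH.eigenvalues

def IsViscSol (n : ℕ) (k l : ℤ) (Ω : Set (Fin n → ℝ)) (u : (Fin n → ℝ) → ℝ) : Prop :=
  IsViscSubsol n k l Ω u ∧ IsViscSupersol n k l Ω u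

def SolvesODE (n : ℕ) (k l : ℤ) (a : Fin n → ℝ) (β : ℝ) (ψ : ℝ → ℝ) : Prop :=
  ContDiffOn ℝ (⊤ : ℕ∞) ψ (Set.Ici 1) ∧ ψ 1 = β ∧
  ∀ r : ℝ, 1 < r →
    ψ r ^ k + xiSup n k a * r * ψ r ^ (k - 1) * deriv ψ r
      - ψ r ^ l - xiInf n l a * r * ψ r ^ (l - 1) * deriv ψ r = 0


section OdeAux

noncomputable def Ffun (A B : ℝ) (m : ℕ) : ℝ → ℝ :=
  fun t => B * Real.log t + (A - B) / m * Real.log (t ^ m - 1)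

noncomputable def gfun (A B : ℝ) (m : ℕ) : ℝ → ℝ :=
  fun t => B / t + (A - B) / m * (m * t ^ (m - 1) / (t ^ m - 1))

theorem hasDerivAt_Ffun {A B : ℝ} {m : ℕ} {t : ℝ} (ht : t ≠ 0) (ht1 : t ^ m ≠ 1) :
    HasDerivAt (Ffun A B m) (gfun A B m t) t := by
  have h1 : HasDerivAt (fun t : ℝ => B * Real.log t) (B * t⁻¹) t :=
    (Real.hasDerivAt_log ht).const_mul B
  have h2 : HasDerivAt (fun t : ℝ => t ^ m - 1) ((m : ℝ) * t ^ (m - 1)) t :=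
    (hasDerivAt_pow m t).sub_const 1
  have h3 : HasDerivAt (fun t : ℝ => Real.log (t ^ m - 1))
      ((t ^ m - 1)⁻¹ * ((m : ℝ) * t ^ (m - 1))) t :=
    by have h := (Real.hasDerivAt_log (sub_ne_zero.2 ht1)).comp t h2; exact h
  have := h1.add (h3.const_mul ((A - B) / m))
  refine this.congr_deriv ?_
  unfold gfun
  rw [div_eq_mul_inv, div_eq_mul_inv]
  ring

theorem contDiffAt_Ffun {A B : ℝ} {m : ℕ} {t : ℝ} (ht : t ≠ 0) (ht1 : t ^ m ≠ 1) :
    ContDiffAt ℝ (⊤ : ℕ∞) (Ffun A B m) t := by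
  have h1 : ContDiffAt ℝ (⊤ : ℕ∞) (fun t : ℝ => B * Real.log t) t :=
    (Real.contDiffAt_log.2 ht).const_smul B
  have h2 : ContDiffAt ℝ (⊤ : ℕ∞) (fun t : ℝ => t ^ m - 1) t :=
    (contDiffAt_id.pow m).sub contDiffAt_const
  have h3 : ContDiffAt ℝ (⊤ : ℕ∞) (fun t : ℝ => Real.log (t ^ m - 1)) t :=
    by have h := (Real.contDiffAt_log.2 (sub_ne_zero.2 ht1)).comp t h2; exact h
  exact h1.add (h3.const_smul ((A - B) / m))

theorem gfun_eq {A B : ℝ} {m : ℕ} (hm : m ≠ 0) {t : ℝ} (ht : t ≠ 0) (ht1 : t ^ m ≠ 1) :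
    gfun A B m t = (A * t ^ m - B) / (t * (t ^ m - 1)) := by
  obtain ⟨m1, rfl⟩ : ∃ m1, m = m1 + 1 := ⟨m - 1, (Nat.succ_pred_eq_of_pos hm.bot_lt).symm⟩
  unfold gfun
  have hm1 : ((m1 : ℝ) + 1) ≠ 0 := by positivity
  have h2 : t ^ (m1 + 1) - 1 ≠ 0 := sub_ne_zero.2 ht1
  simp only [Nat.add_sub_cancel]
  field_simp
  ring

theorem gfun_pos {A B : ℝ} {m : ℕ} (hB : 0 ≤ B) (hAB : B < A) (hm : m ≠ 0) {t : ℝ}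
    (ht : 1 < t) : 0 < gfun A B m t := by
  have ht0 : (0:ℝ) < t := lt_trans one_pos ht
  have h1 : (0:ℝ) ≤ B / t := div_nonneg hB ht0.le
  have hmpos : (0:ℝ) < m := by exact_mod_cast hm.bot_lt
  have h2 : (0:ℝ) < t ^ m - 1 := sub_pos.2 (one_lt_pow₀ ht hm)
  have h3 : (0:ℝ) < (m : ℝ) * t ^ (m - 1) := by positivity
  have h4 : (0:ℝ) < (A - B) / m * ((m : ℝ) * t ^ (m - 1) / (t ^ m - 1)) := by
    apply mul_pos (div_pos (sub_pos.2 hAB) hmpos) (div_pos h3 h2)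
  exact add_pos_of_nonneg_of_pos h1 h4

theorem tendsto_Ffun_atBot {A B : ℝ} {m : ℕ} (hAB : B < A) (hm : m ≠ 0) :
    Tendsto (Ffun A B m) (𝓝[{t : ℝ | t ^ m ≠ 1}] 1) atBot := by
  have hmpos : (0:ℝ) < m := by exact_mod_cast hm.bot_lt
  have hC : 0 < (A - B) / m := div_pos (sub_pos.2 hAB) hmpos
  have h1 : Tendsto (fun t : ℝ => B * Real.log t) (𝓝[{t : ℝ | t ^ m ≠ 1}] 1) (𝓝 0) := by
    have : ContinuousAt (fun t : ℝ => B * Real.log t) 1 :=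
      (Real.continuousAt_log one_ne_zero).const_smul B
    have := this.continuousWithinAt (s := {t : ℝ | t ^ m ≠ 1})
    simpa [Real.log_one] using this.tendsto
  have h2 : Tendsto (fun t : ℝ => t ^ m - 1) (𝓝[{t : ℝ | t ^ m ≠ 1}] 1) (𝓝[≠] 0) := by
    rw [tendsto_nhdsWithin_iff]
    constructor
    · have : ContinuousAt (fun t : ℝ => t ^ m - 1) 1 := by fun_prop
      have := this.continuousWithinAt (s := {t : ℝ | t ^ m ≠ 1})
      simpa using this.tendsto
    · filter_upwards [self_mem_nhdsWithin] with t ht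
      exact sub_ne_zero.2 ht
  have h3 : Tendsto (fun t : ℝ => Real.log (t ^ m - 1)) (𝓝[{t : ℝ | t ^ m ≠ 1}] 1) atBot :=
    Real.tendsto_log_nhdsNE_zero.comp h2
  have h4 : Tendsto (fun t : ℝ => (A - B) / m * Real.log (t ^ m - 1))
      (𝓝[{t : ℝ | t ^ m ≠ 1}] 1) atBot := by
    exact Tendsto.const_mul_atBot hC h3
  exact h1.add_atBot h4

theorem pow_ne_one_of_gt {m : ℕ} (hm : m ≠ 0) {t : ℝ} (ht : 1 < t) : t ^ m ≠ 1 :=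
  ne_of_gt (one_lt_pow₀ ht hm)

theorem pow_ne_one_of_pos_ne {m : ℕ} (hm : m ≠ 0) {t : ℝ} (ht : 0 < t) (ht1 : t ≠ 1) :
    t ^ m ≠ 1 := by
  rcases lt_or_gt_of_ne ht1 with h | h
  · exact ne_of_lt (pow_lt_one₀ ht.le h hm)
  · exact pow_ne_one_of_gt hm h

theorem strictMonoOn_Ffun {A B : ℝ} {m : ℕ} (hB : 0 ≤ B) (hAB : B < A) (hm : m ≠ 0) :
    StrictMonoOn (Ffun A B m) (Ioi 1) := by
  apply strictMonoOn_of_deriv_pos (convex_Ioi 1)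
  · intro t ht
    exact (hasDerivAt_Ffun (lt_trans zero_lt_one ht).ne' (pow_ne_one_of_gt hm ht)
      ).continuousAt.continuousWithinAt
  · intro t ht
    rw [interior_Ioi] at ht
    rw [(hasDerivAt_Ffun (t := t) (lt_trans zero_lt_one ht).ne' (pow_ne_one_of_gt hm ht)).deriv]
    exact gfun_pos hB hAB hm ht

theorem Ffun_tendsto_atBot_right {A B : ℝ} {m : ℕ} (hAB : B < A) (hm : m ≠ 0) :
    Tendsto (Ffun A B m) (𝓝[>] (1:ℝ)) atBot := by
  apply (tendsto_Ffun_atBot hAB hm).mono_left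
  apply nhdsWithin_mono
  intro t ht
  exact pow_ne_one_of_gt hm ht

theorem Ffun_image {A B : ℝ} {m : ℕ} (hB : 0 ≤ B) (hAB : B < A) (hm : m ≠ 0) {β : ℝ}
    (hβ : 1 < β) : Iio (Ffun A B m (β + 1)) ⊆ Ffun A B m '' Ioi 1 := by
  intro y hy
  simp only [Set.mem_Iio] at hy
  -- find t ∈ (1, β+1) with F t < y
  have h1 : ∀ᶠ t in 𝓝[>] (1:ℝ), Ffun A B m t < y :=
    (Ffun_tendsto_atBot_right hAB hm).eventually (eventually_lt_atBot y)
  have h2 : ∀ᶠ t in 𝓝[>] (1:ℝ), t < β + 1 := by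
    apply eventually_nhdsWithin_of_eventually_nhds
    exact Filter.Tendsto.eventually_lt_const (by linarith) tendsto_id
  obtain ⟨t, ht, htb, ht1⟩ : ∃ t, Ffun A B m t < y ∧ t < β + 1 ∧ 1 < t := by
    rcases (h1.and (h2.and self_mem_nhdsWithin)).exists with ⟨t, h, h', h''⟩
    exact ⟨t, h, h', h''⟩
  have hsub : Icc t (β + 1) ⊆ Ioi (1:ℝ) := fun s hs => lt_of_lt_of_le ht1 hs.1
  have hcont : ContinuousOn (Ffun A B m) (Icc t (β + 1)) := by
    intro s hs
    exact (hasDerivAt_Ffun (lt_trans zero_lt_one (hsub hs)).ne' (pow_ne_one_of_gt hm (hsub hs))).continuousAt.continuousWithinAt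
  have := intermediate_value_Icc (le_of_lt (by linarith : t < β + 1)) hcont
  have hmem : y ∈ Icc (Ffun A B m t) (Ffun A B m (β + 1)) := ⟨ht.le, hy.le⟩
  obtain ⟨s, hs, hsy⟩ := this hmem
  exact ⟨s, hsub hs, hsy⟩
  
theorem invF_pack {A B : ℝ} {m : ℕ} (hB : 0 ≤ B) (hAB : B < A) (hm : m ≠ 0) {β : ℝ}
    (hβ : 1 < β) {y : ℝ} (hy : y < Ffun A B m (β + 1)) :
    1 < Function.invFunOn (Ffun A B m) (Ioi 1) y ∧
    Ffun A B m (Function.invFunOn (Ffun A B m) (Ioi 1) y) = y ∧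
    ContDiffAt ℝ (⊤ : ℕ∞) (Function.invFunOn (Ffun A B m) (Ioi 1)) y ∧
    HasDerivAt (Function.invFunOn (Ffun A B m) (Ioi 1))
      (gfun A B m (Function.invFunOn (Ffun A B m) (Ioi 1) y))⁻¹ y := by
  set F := Ffun A B m with hF
  set invF := Function.invFunOn F (Ioi 1) with hinvF
  have hinj : InjOn F (Ioi 1) := (strictMonoOn_Ffun hB hAB hm).injOn
  have himg : Iio (F (β + 1)) ⊆ F '' Ioi 1 := Ffun_image hB hAB hm hβ
  have hmem : ∃ t ∈ Ioi (1:ℝ), F t = y := by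
    obtain ⟨t, ht, hty⟩ := himg hy; exact ⟨t, ht, hty⟩
  have ht0 : invF y ∈ Ioi (1:ℝ) := Function.invFunOn_mem hmem
  have hFy : F (invF y) = y := Function.invFunOn_eq hmem
  set t0 := invF y with hT0
  have ht0' : (1:ℝ) < t0 := ht0
  have hU1 : (t0:ℝ) ≠ 0 := by positivity
  have hU2 : t0 ^ m ≠ 1 := pow_ne_one_of_gt hm ht0'
  have hcd : ContDiffAt ℝ (⊤ : ℕ∞) F t0 := contDiffAt_Ffun hU1 hU2
  have hder : HasDerivAt F (gfun A B m t0) t0 := hasDerivAt_Ffun hU1 hU2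
  have hne : gfun A B m t0 ≠ 0 := ne_of_gt (gfun_pos hB hAB hm ht0')
  -- left inverse property near t0
  have hleft : ∀ᶠ x in 𝓝 t0, invF (F x) = x := by
    filter_upwards [Ioi_mem_nhds ht0'] with x hx
    exact hinj.leftInvOn_invFunOn hx
  have hstrict : HasStrictDerivAt F (gfun A B m t0) t0 :=
    hcd.hasStrictDerivAt' hder (by simp)
  -- derivative of invF
  have hderinv : HasStrictDerivAt invF (gfun A B m t0)⁻¹ y := by
    have := hstrict.to_local_left_inverse (f' := gfun A B m t0) (hf' := hne) hleft
    rwa [hFy] at this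
  -- smooth local inverse
  have hfd : HasFDerivAt F
      ((ContinuousLinearEquiv.unitsEquivAut ℝ (Units.mk0 _ hne) : ℝ ≃L[ℝ] ℝ) : ℝ →L[ℝ] ℝ) t0 :=
    hder.hasFDerivAt_equiv hne
  have hlinv : ContDiffAt ℝ (⊤ : ℕ∞) (hcd.localInverse hfd (by simp)) y := by
    have := hcd.to_localInverse (hf' := hfd) (hn := (by simp))
    rwa [hFy] at this
  have hevinv : ∀ᶠ z in 𝓝 y, hcd.localInverse hfd (by simp) z = invF z := by
    have hstr := hcd.hasStrictFDerivAt' hfd (by simp)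
    have h1 : ∀ᶠ z in 𝓝 (F t0), F (hstr.localInverse F _ t0 z) = z :=
      hstr.eventually_right_inverse
    have h2 : Tendsto (hstr.localInverse F _ t0) (𝓝 (F t0)) (𝓝 t0) := by
      have hc := hstr.localInverse_continuousAt
      rw [ContinuousAt, hstr.localInverse_apply_image] at hc
      exact hc
    have h3 : ∀ᶠ z in 𝓝 (F t0), hstr.localInverse F _ t0 z ∈ Ioi (1:ℝ) :=
      h2.eventually (Ioi_mem_nhds ht0')
    have h4 : ∀ᶠ z in 𝓝 (F t0), z ∈ Iio (F (β + 1)) := by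
      rw [hFy]
      exact Iio_mem_nhds hy
    rw [hFy] at h1 h3 h4
    filter_upwards [h1, h3, h4] with z hz1 hz3 hz4
    have hzmem : ∃ t ∈ Ioi (1:ℝ), F t = z := by
      obtain ⟨t, ht, hty⟩ := himg hz4; exact ⟨t, ht, hty⟩
    have : F (invF z) = z := Function.invFunOn_eq hzmem
    exact hinj hz3 (Function.invFunOn_mem hzmem) (by rw [hz1, this])
  have hcdinv : ContDiffAt ℝ (⊤ : ℕ∞) invF y := hlinv.congr_of_eventuallyEq (hevinv.mono fun z hz => hz.symm)
  exact ⟨ht0', hFy, hcdinv, hderinv.hasDerivAt⟩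

section KL
variable {A B : ℝ} {k l : ℤ}

theorem gfun_key (hl : 0 ≤ l) (hlk : l < k) {t : ℝ} (ht : 0 < t)
    (ht1 : t ^ (k - l).toNat ≠ 1) :
    gfun A B (k - l).toNat t * (t ^ k - t ^ l) = A * t ^ (k - 1) - B * t ^ (l - 1) := by
  set m := (k - l).toNat with hmdef
  have hm : m ≠ 0 := by omega
  have hmk : (m : ℤ) = k - l := Int.toNat_of_nonneg (by omega)
  have h1 : t ^ k = t ^ l * t ^ m := by
    rw [← zpow_natCast t m, ← zpow_add₀ ht.ne']; congr 1; omega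
  have h2 : t ^ (k - 1) = t ^ (l - 1) * t ^ m := by
    rw [← zpow_natCast t m, ← zpow_add₀ ht.ne']; congr 1; omega
  have h3 : t ^ l = t ^ (l - 1) * t := by
    rw [← zpow_add_one₀ ht.ne']; congr 1; omega
  rw [gfun_eq hm ht.ne' ht1, h1, h2, h3]
  have hne : t ^ m - 1 ≠ 0 := sub_ne_zero.2 ht1
  field_simp

theorem ode_point_iff (hl : 0 ≤ l) (hlk : l < k) {t r : ℝ} (ht : 0 < t)
    (ht1 : t ^ (k - l).toNat ≠ 1) (hr : 0 < r) (d : ℝ) :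
    (t ^ k + A * r * t ^ (k - 1) * d - t ^ l - B * r * t ^ (l - 1) * d = 0) ↔
      gfun A B (k - l).toNat t * d = -r⁻¹ := by
  have key := gfun_key (A := A) (B := B) hl hlk ht ht1
  have hne : t ^ k - t ^ l ≠ 0 := by
    have h1 : t ^ k = t ^ l * t ^ (k - l).toNat := by
      rw [← zpow_natCast t, ← zpow_add₀ ht.ne']; congr 1; omega
    rw [h1]
    have : t ^ l ≠ 0 := (zpow_pos ht l).ne'
    intro h
    apply ht1
    have := sub_eq_zero.1 h
    field_simp at this
    linarith [this]
  have e1 : t ^ k + A * r * t ^ (k - 1) * d - t ^ l - B * r * t ^ (l - 1) * d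
      = (t ^ k - t ^ l) * (1 + r * d * gfun A B (k - l).toNat t) := by
    linear_combination (-(r * d)) * key
  rw [e1, mul_eq_zero]
  constructor
  · rintro (h | h)
    · exact absurd h hne
    · have : gfun A B (k - l).toNat t * d * r = -1 := by linarith [h]
      field_simp at this ⊢
      linarith
  · intro h
    right
    have : r * d * gfun A B (k - l).toNat t = -1 := by
      have := congrArg (fun z => z * r) h
      field_simp at this
      linarith
    linarith
end KL

section KL
variable {A B : ℝ} {k l : ℤ}

/-- Constancy of the first integral along a solution staying in the good region. -/
theorem first_integral_const (hl : 0 ≤ l) (hlk : l < k) {φ : ℝ → ℝ}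
    (hφ : ContDiffOn ℝ (⊤ : ℕ∞) φ (Set.Ici 1))
    (hODE : ∀ r : ℝ, 1 < r →
      φ r ^ k + A * r * φ r ^ (k - 1) * deriv φ r
        - φ r ^ l - B * r * φ r ^ (l - 1) * deriv φ r = 0)
    {u x : ℝ} (hu : 1 < u) (hux : u ≤ x)
    (hmem : ∀ s ∈ Icc u x, 0 < φ s ∧ φ s ≠ 1) :
    Ffun A B (k - l).toNat (φ x) + Real.log x
      = Ffun A B (k - l).toNat (φ u) + Real.log u := by
  set m := (k - l).toNat with hmdef
  have hm : m ≠ 0 := by omega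
  set h : ℝ → ℝ := fun s => Ffun A B m (φ s) + Real.log s with hh
  have hsub : Icc u x ⊆ Ici (1:ℝ) := fun s hs => le_of_lt (lt_of_lt_of_le hu hs.1)
  have hUm : ∀ s ∈ Icc u x, (φ s ≠ 0) ∧ φ s ^ m ≠ 1 := by
    intro s hs
    obtain ⟨h0, h1⟩ := hmem s hs
    exact ⟨h0.ne', pow_ne_one_of_pos_ne hm h0 h1⟩
  have hcont : ContinuousOn h (Icc u x) := by
    intro s hs
    obtain ⟨h0, h1⟩ := hUm s hs
    have hφc : ContinuousWithinAt φ (Icc u x) s :=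
      (hφ.continuousOn.mono hsub) s hs
    have hFc : ContinuousAt (Ffun A B m) (φ s) := (contDiffAt_Ffun h0 h1).continuousAt
    have hlogc : ContinuousWithinAt Real.log (Icc u x) s :=
      (Real.continuousAt_log (by nlinarith [hs.1] : s ≠ 0)).continuousWithinAt
    exact (hFc.comp_continuousWithinAt hφc).add hlogc
  have hderiv : ∀ s ∈ Ico u x, HasDerivWithinAt h 0 (Ici s) s := by
    intro s hs
    have hs1 : 1 < s := lt_of_lt_of_le hu hs.1
    have hsdom : Ici (1:ℝ) ∈ 𝓝 s := Ici_mem_nhds hs1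
    have hφd : HasDerivAt φ (deriv φ s) s := by
      have := (hφ.contDiffAt hsdom).differentiableAt (by simp)
      exact this.hasDerivAt
    obtain ⟨h0, h1⟩ := hUm s ⟨hs.1, hs.2.le⟩
    obtain ⟨hp, _⟩ := hmem s ⟨hs.1, hs.2.le⟩
    have hFd : HasDerivAt (Ffun A B m) (gfun A B m (φ s)) (φ s) := hasDerivAt_Ffun h0 h1
    have hcomp : HasDerivAt (fun s => Ffun A B m (φ s)) (gfun A B m (φ s) * deriv φ s) s :=
      hFd.comp s hφd
    have hlog : HasDerivAt Real.log s⁻¹ s := Real.hasDerivAt_log (by positivity)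
    have htotal : HasDerivAt h (gfun A B m (φ s) * deriv φ s + s⁻¹) s := hcomp.add hlog
    have hkey : gfun A B m (φ s) * deriv φ s = -s⁻¹ :=
      (ode_point_iff hl hlk hp h1 (lt_trans one_pos hs1) (deriv φ s)).1 (hODE s hs1)
    have : gfun A B m (φ s) * deriv φ s + s⁻¹ = 0 := by rw [hkey]; ring
    rw [this] at htotal
    exact htotal.hasDerivWithinAt
  have := constant_of_has_deriv_right_zero hcont hderiv
  exact this x ⟨hux, le_refl x⟩

/-- The first integral blows up to `-∞` as the solution approaches value 1. -/
theorem tendsto_h_atBot (hAB : B < A) (hl : 0 ≤ l) (hlk : l < k) {φ : ℝ → ℝ} {r1 : ℝ}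
    (hr1 : 1 ≤ r1) (hcont : ContinuousWithinAt φ (Set.Ici 1) r1) (hval : φ r1 = 1)
    (hne : ∀ᶠ u in 𝓝[>] r1, 0 < φ u ∧ φ u ≠ 1) :
    Tendsto (fun u => Ffun A B (k - l).toNat (φ u) + Real.log u) (𝓝[>] r1) atBot := by
  set m := (k - l).toNat with hmdef
  have hm : m ≠ 0 := by omega
  have hlog : Tendsto Real.log (𝓝[>] r1) (𝓝 (Real.log r1)) :=
    ((Real.continuousAt_log (by positivity : r1 ≠ 0)).continuousWithinAt).tendsto
  have hφt : Tendsto φ (𝓝[>] r1) (𝓝 1) := by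
    have h1 : 𝓝[>] r1 ≤ 𝓝[Ici 1] r1 := nhdsWithin_mono r1 (fun s hs => le_of_lt
      (lt_of_le_of_lt hr1 hs))
    have := hcont.tendsto
    rw [hval] at this
    exact this.mono_left h1
  have hφt' : Tendsto φ (𝓝[>] r1) (𝓝[{t : ℝ | t ^ m ≠ 1}] 1) := by
    rw [tendsto_nhdsWithin_iff]
    refine ⟨hφt, ?_⟩
    filter_upwards [hne] with u hu
    exact pow_ne_one_of_pos_ne hm hu.1 hu.2
  have hF : Tendsto (fun u => Ffun A B m (φ u)) (𝓝[>] r1) atBot :=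
    (tendsto_Ffun_atBot hAB hm).comp hφt'
  have h2 := hlog.add_atBot hF
  have : (fun u => Ffun A B m (φ u) + Real.log u)
      = fun u => Real.log u + Ffun A B m (φ u) := by
    funext u; ring
  rw [this]
  exact h2
end KL

theorem main_construction {A B : ℝ} {m : ℕ} (hB : 0 ≤ B) (hAB : B < A) (hm : m ≠ 0)
    {β : ℝ} (hβ : 1 < β) :
    ∃ ψ : ℝ → ℝ, (∀ r : ℝ, 1 ≤ r → ContDiffAt ℝ (⊤ : ℕ∞) ψ r) ∧ ψ 1 = β ∧
      (∀ r : ℝ, 1 ≤ r → 1 < ψ r) ∧ (∀ r : ℝ, 1 ≤ r → ψ r ≤ β) ∧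
      (∀ r : ℝ, 1 < r → ψ r < β) ∧
      (∀ r : ℝ, 1 ≤ r → HasDerivAt ψ ((gfun A B m (ψ r))⁻¹ * (-r⁻¹)) r) ∧
      (∀ r : ℝ, 1 ≤ r → Ffun A B m (ψ r) = Ffun A B m β - Real.log r) := by
  set F := Ffun A B m with hF
  set invF := Function.invFunOn F (Ioi 1) with hinvF
  have hmono := strictMonoOn_Ffun (A := A) (B := B) hB hAB hm
  have hFβ : F β < F (β + 1) := hmono (by exact hβ) (by simp only [Set.mem_Ioi]; linarith)
    (by linarith)
  set u : ℝ → ℝ := fun r => F β - Real.log r with hu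
  set ψ : ℝ → ℝ := fun r => invF (u r) with hψ
  have hyr : ∀ r : ℝ, 1 ≤ r → u r < F (β + 1) := by
    intro r hr
    have : 0 ≤ Real.log r := Real.log_nonneg hr
    simp only [hu]
    linarith
  have hud : ∀ r : ℝ, 0 < r → HasDerivAt u (-r⁻¹) r := by
    intro r hr
    simpa using ((Real.hasDerivAt_log hr.ne').const_sub (F β))
  refine ⟨ψ, ?_, ?_, ?_, ?_, ?_, ?_, ?_⟩
  · -- smoothness
    intro r hr
    have hpack := invF_pack hB hAB hm hβ (hyr r hr)
    have hucd : ContDiffAt ℝ (⊤ : ℕ∞) u r := by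
      have : ContDiffAt ℝ (⊤ : ℕ∞) Real.log r := Real.contDiffAt_log.2 (by positivity)
      exact contDiffAt_const.sub this
    exact (hpack.2.2.1).comp r hucd
  · -- initial value
    have : u 1 = F β := by simp [hu]
    rw [hψ]
    simp only [this]
    exact hmono.injOn.leftInvOn_invFunOn (by exact hβ)
  · intro r hr; exact (invF_pack hB hAB hm hβ (hyr r hr)).1
  · -- ψ r ≤ β
    intro r hr
    have hpack := invF_pack hB hAB hm hβ (hyr r hr)
    by_contra hc
    push_neg at hc
    have h1 : F β < F (ψ r) := hmono (by exact hβ)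
      (by exact lt_trans hβ hc) hc
    have h2 := hpack.2.1
    change F (ψ r) = u r at h2
    rw [h2] at h1
    have : 0 ≤ Real.log r := Real.log_nonneg hr
    simp only [hu] at h1
    linarith
  · -- ψ r < β for r > 1
    intro r hr
    have hpack := invF_pack hB hAB hm hβ (hyr r hr.le)
    by_contra hc
    push_neg at hc
    have h1 : F β ≤ F (ψ r) := hmono.monotoneOn (by exact hβ)
      (by exact lt_of_lt_of_le hβ hc) hc
    have h2 := hpack.2.1
    change F (ψ r) = u r at h2
    rw [h2] at h1
    have : 0 < Real.log r := Real.log_pos hr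
    simp only [hu] at h1
    linarith
  · -- derivative
    intro r hr
    have hpack := invF_pack hB hAB hm hβ (hyr r hr)
    exact (hpack.2.2.2).comp r (hud r (by linarith))
  · intro r hr
    exact (invF_pack hB hAB hm hβ (hyr r hr)).2.1

theorem xiInf_nonneg (n : ℕ) (hn : 3 ≤ n) (l : ℤ) (a : Fin n → ℝ) (ha : ∀ i, 0 < a i) :
    0 ≤ xiInf n l a := by
  have hnpos : 0 < n := by omega
  haveI : NeZero n := ⟨by omega⟩
  apply le_csInf
  · refine ⟨Xi n l a (fun _ => 1), fun _ => 1, ?_, rfl⟩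
    intro h
    have := congrFun h ⟨0, hnpos⟩
    simp at this
  · rintro y ⟨x, -, rfl⟩
    apply div_nonneg
    · apply Finset.sum_nonneg
      intro i _
      have h1 : 0 ≤ esymmDel n (l - 1) i a := by
        unfold esymmDel
        split
        · apply Finset.sum_nonneg
          intro s _
          exact Finset.prod_nonneg fun j _ => (ha j).le
        · exact le_refl 0
      exact mul_nonneg (mul_nonneg h1 (sq_nonneg _)) (sq_nonneg _)
    · apply mul_nonneg
      · unfold esymm
        split
        · apply Finset.sum_nonneg
          intro s _
          exact Finset.prod_nonneg fun j _ => (ha j).le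
        · exact le_refl 0
      · apply Finset.sum_nonneg
        intro i _
        have := (ha i).le
        positivity

theorem xi_gap (n : ℕ) (k l : ℤ) (a : Fin n → ℝ) (hlk : l < k)
    (hm : 2 < mkl n k l a) : xiInf n l a < xiSup n k a := by
  by_contra hc
  push_neg at hc
  have h1 : xiSup n k a - xiInf n l a ≤ 0 := by linarith
  have h2 : (0:ℝ) < (k : ℝ) - (l : ℝ) := by
    have : (l:ℝ) < k := by exact_mod_cast hlk
    linarith
  unfold mkl at hm
  have : ((k : ℝ) - (l : ℝ)) / (xiSup n k a - xiInf n l a) ≤ 0 :=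
    div_nonpos_of_nonneg_of_nonpos h2.le h1
  linarith

end OdeAux

/-- **Lemma 3.1, existence/uniqueness and part (i).** The initial value problem
(3.1) has a unique smooth solution `ψ(·,β)` on `[1,+∞)`, with
`1 ≤ ψ ≤ β`, `ψ` nonincreasing, `ψ(·,1) ≡ 1`, and `1 < ψ(r,β) < β` for
`r > 1` when `β > 1`. -/
theorem ode_existence_uniqueness
    (n : ℕ) (hn : 3 ≤ n) (k l : ℤ) (hl : 0 ≤ l) (hlk : l < k) (hkn : k ≤ (n : ℤ))
    (a : Fin n → ℝ) (ha : ∀ i, 0 < a i) (hmono : Monotone a)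
    (hσ : esymm n k a = esymm n l a) (hm : 2 < mkl n k l a)
    (β : ℝ) (hβ : 1 ≤ β) :
    ∃ ψ : ℝ → ℝ, SolvesODE n k l a β ψ ∧
      (∀ ψ' : ℝ → ℝ, SolvesODE n k l a β ψ' → Set.EqOn ψ' ψ (Set.Ici 1)) ∧
      (∀ r : ℝ, 1 ≤ r → 1 ≤ ψ r ∧ ψ r ≤ β) ∧
      (∀ r : ℝ, 1 ≤ r → derivWithin ψ (Set.Ici 1) r ≤ 0) ∧
      (β = 1 → ∀ r : ℝ, 1 ≤ r → ψ r = 1) ∧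
      (1 < β → ∀ r : ℝ, 1 < r → 1 < ψ r ∧ ψ r < β) := by
  set A := xiSup n k a with hAdef
  set B := xiInf n l a with hBdef
  have hB : 0 ≤ B := xiInf_nonneg n hn l a ha
  have hAB : B < A := xi_gap n k l a hlk hm
  set m : ℕ := (k - l).toNat with hmdef
  have hmne : m ≠ 0 := by omega
  rcases eq_or_lt_of_le hβ with hβ1 | hβ1
  · -- case β = 1 : the constant solution ψ ≡ 1
    refine ⟨fun _ => 1, ⟨contDiffOn_const, hβ1, ?_⟩, ?_, ?_, ?_, ?_, ?_⟩
    · intro r hr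
      simp [deriv_const]
    · -- uniqueness
      rintro φ ⟨hφc, hφinit, hφode⟩ x hx
      have hφ1 : φ 1 = 1 := by rw [hφinit, ← hβ1]
      show φ x = 1
      by_contra hne1
      have hx1 : 1 < x := by
        rcases eq_or_lt_of_le (show (1:ℝ) ≤ x from hx) with h | h
        · exact absurd (h ▸ hφ1) hne1
        · exact h
      set T : Set ℝ := Set.Icc 1 x ∩ φ ⁻¹' {1} with hTdef
      have hTclosed : IsClosed T :=
        (hφc.continuousOn.mono (Set.Icc_subset_Ici_self)).preimage_isClosed_of_isClosed
          isClosed_Icc isClosed_singleton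
      have hT1 : (1:ℝ) ∈ T := ⟨⟨le_refl 1, hx1.le⟩, hφ1⟩
      have hTbdd : BddAbove T := ⟨x, fun y hy => hy.1.2⟩
      set r1 := sSup T with hr1def
      have hr1T : r1 ∈ T := hTclosed.csSup_mem ⟨1, hT1⟩ hTbdd
      have hφr1 : φ r1 = 1 := hr1T.2
      have hr11 : 1 ≤ r1 := hr1T.1.1
      have hr1lt : r1 < x := lt_of_le_of_ne hr1T.1.2 (fun h => hne1 (h ▸ hφr1))
      have hnotone : ∀ u ∈ Set.Ioc r1 x, φ u ≠ 1 := by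
        intro u hu h
        have : u ∈ T := ⟨⟨le_trans hr11 hu.1.le, hu.2⟩, h⟩
        exact absurd (le_csSup hTbdd this) (not_le.2 hu.1)
      have hφcontr1 : ContinuousWithinAt φ (Set.Ici 1) r1 :=
        hφc.continuousOn r1 hr11
      -- eventually near r1 within Ici 1, φ is in (1/2, 3/2)
      have hball : ∀ᶠ u in 𝓝[Set.Ici 1] r1, φ u ∈ Set.Ioo (1/2 : ℝ) (3/2) := by
        apply hφcontr1.tendsto
        rw [hφr1]
        exact Ioo_mem_nhds (by norm_num) (by norm_num)
      have hball' : ∀ᶠ u in 𝓝[>] r1, φ u ∈ Set.Ioo (1/2 : ℝ) (3/2) :=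
        hball.filter_mono (nhdsWithin_mono r1 (fun s hs => le_of_lt (lt_of_le_of_lt hr11 hs)))
      -- choose x1 > r1 with good properties on (r1, x1]
      obtain ⟨x1, hx1r, hsub⟩ := mem_nhdsGT_iff_exists_Ioc_subset.1
        (Filter.inter_mem hball' (Ioc_mem_nhdsGT hr1lt))
      have hx1r' : r1 < x1 := hx1r
      have hgood : ∀ s ∈ Set.Ioc r1 x1, (1/2 : ℝ) < φ s ∧ φ s < 3/2 ∧ s ≤ x ∧ φ s ≠ 1 := by
        intro s hs
        obtain ⟨h1, h2⟩ := hsub hs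
        exact ⟨h1.1, h1.2, h2.2, hnotone s h2⟩
      -- the first integral is constant on (r1, x1]
      have hx1x : x1 ≤ x := (hsub ⟨hx1r', le_refl x1⟩).2.2
      have hconst : ∀ u ∈ Set.Ioc r1 x1,
          Ffun A B m (φ x1) + Real.log x1 = Ffun A B m (φ u) + Real.log u := by
        intro u hu
        apply first_integral_const hl hlk hφc hφode (lt_of_le_of_lt hr11 hu.1) hu.2
        intro s hs
        have hs' : s ∈ Set.Ioc r1 x1 := ⟨lt_of_lt_of_le hu.1 hs.1, hs.2⟩
        obtain ⟨h1, _, _, h4⟩ := hgood s hs'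
        exact ⟨by linarith, h4⟩
      -- the first integral tends to -∞ at r1 from the right
      have hposne : ∀ᶠ u in 𝓝[>] r1, 0 < φ u ∧ φ u ≠ 1 := by
        filter_upwards [Filter.inter_mem hball' (Ioc_mem_nhdsGT hr1lt)] with u hu
        exact ⟨by linarith [hu.1.1], hnotone u hu.2⟩
      have htend := tendsto_h_atBot (k := k) (l := l) hAB hl hlk hr11 hφcontr1 hφr1 hposne
      have hconst' : Filter.Tendsto (fun u => Ffun A B m (φ u) + Real.log u) (𝓝[>] r1)
          (𝓝 (Ffun A B m (φ x1) + Real.log x1)) := by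
        apply Filter.Tendsto.congr' _ tendsto_const_nhds
        filter_upwards [Ioc_mem_nhdsGT hx1r'] with u hu
        exact hconst u hu
      exact not_tendsto_atBot_of_tendsto_nhds hconst' htend
    · intro r hr; exact ⟨le_refl 1, hβ⟩
    · intro r hr
      rw [derivWithin_fun_const]
      exact le_refl _
    · intro _ r _; rfl
    · intro h; exact absurd hβ1 (by linarith)
  · -- case 1 < β
    obtain ⟨ψ, hcd, hψ1, hgt1, hleβ, hltβ, hder, hFψ⟩ :=
      main_construction (A := A) (B := B) hB hAB hmne hβ1
    have hODEψ : ∀ r : ℝ, 1 < r →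
        ψ r ^ k + A * r * ψ r ^ (k - 1) * deriv ψ r
          - ψ r ^ l - B * r * ψ r ^ (l - 1) * deriv ψ r = 0 := by
      intro r hr
      have hr0 : (0:ℝ) < r := by linarith
      have ht1 : 1 < ψ r := hgt1 r hr.le
      have htpos : (0:ℝ) < ψ r := by linarith
      have hg : 0 < gfun A B m (ψ r) := gfun_pos hB hAB hmne ht1
      have hd := hder r hr.le
      rw [hd.deriv]
      apply (ode_point_iff hl hlk htpos (pow_ne_one_of_gt hmne ht1) hr0 _).2
      rw [← mul_assoc, mul_inv_cancel₀ hg.ne', one_mul]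
    refine ⟨ψ, ⟨fun r hr => (hcd r hr).contDiffWithinAt, hψ1, hODEψ⟩, ?_, ?_, ?_, ?_, ?_⟩
    · -- uniqueness
      rintro φ ⟨hφc, hφinit, hφode⟩
      have hmonoF := strictMonoOn_Ffun (A := A) (B := B) hB hAB hmne
      have key : ∀ x : ℝ, 1 < x → (∀ u, 1 < u → u ≤ x → 1 < φ u) → φ x = ψ x := by
        intro x hx hgt
        have hφx : 1 < φ x := hgt x hx (le_refl x)
        have hcst : ∀ u ∈ Set.Ioc 1 x,
            Ffun A B m (φ x) + Real.log x = Ffun A B m (φ u) + Real.log u := by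
          intro u hu
          apply first_integral_const hl hlk hφc hφode hu.1 hu.2
          intro s hs
          have : 1 < φ s := hgt s (lt_of_lt_of_le hu.1 hs.1) hs.2
          exact ⟨by linarith, by linarith⟩
        have htend : Filter.Tendsto (fun u => Ffun A B m (φ u) + Real.log u) (𝓝[>] (1:ℝ))
            (𝓝 (Ffun A B m β + Real.log 1)) := by
          have hφt : Filter.Tendsto φ (𝓝[>] (1:ℝ)) (𝓝 β) := by
            have h1 := (hφc.continuousOn 1 Set.self_mem_Ici).tendsto
            rw [hφinit] at h1
            exact h1.mono_left (nhdsWithin_mono 1 (fun s hs => Set.mem_Ici.2 (le_of_lt hs)))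
          have hFc : ContinuousAt (Ffun A B m) β :=
            (contDiffAt_Ffun (by positivity : β ≠ 0)
              (pow_ne_one_of_gt hmne hβ1)).continuousAt
          have h2 : Filter.Tendsto (fun u => Ffun A B m (φ u)) (𝓝[>] (1:ℝ))
              (𝓝 (Ffun A B m β)) := (hFc.tendsto.comp hφt)
          have h3 : Filter.Tendsto Real.log (𝓝[>] (1:ℝ)) (𝓝 (Real.log 1)) :=
            ((Real.continuousAt_log one_ne_zero).continuousWithinAt).tendsto
          exact h2.add h3
        have hconst' : Filter.Tendsto (fun u => Ffun A B m (φ u) + Real.log u) (𝓝[>] (1:ℝ))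
            (𝓝 (Ffun A B m (φ x) + Real.log x)) := by
          apply Filter.Tendsto.congr' _ tendsto_const_nhds
          filter_upwards [Ioc_mem_nhdsGT hx] with u hu
          exact hcst u hu
        have heq := tendsto_nhds_unique hconst' htend
        have hval : Ffun A B m (φ x) = Ffun A B m β - Real.log x := by
          rw [Real.log_one] at heq
          linarith
        have hval2 := hFψ x hx.le
        exact hmonoF.injOn hφx (hgt1 x hx.le) (by rw [hval, hval2])
      by_cases hSbad : ∀ u : ℝ, 1 ≤ u → 1 < φ u
      · intro x hx
        rcases eq_or_lt_of_le (show (1:ℝ) ≤ x from hx) with h | h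
        · rw [← h, hφinit, hψ1]
        · exact key x h (fun u hu _ => hSbad u hu.le)
      · exfalso
        push_neg at hSbad
        obtain ⟨w, hw1, hw2⟩ := hSbad
        set S : Set ℝ := Set.Ici 1 ∩ φ ⁻¹' (Set.Iic 1) with hSdef
        have hSclosed : IsClosed S :=
          hφc.continuousOn.preimage_isClosed_of_isClosed isClosed_Ici isClosed_Iic
        have hSne : S.Nonempty := ⟨w, hw1, hw2⟩
        have hSbddb : BddBelow S := ⟨1, fun y hy => hy.1⟩
        set rs := sInf S with hrsdef
        have hrsS : rs ∈ S := hSclosed.csInf_mem hSne hSbddb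
        have hrs1 : 1 ≤ rs := hrsS.1
        have hφrs : φ rs ≤ 1 := hrsS.2
        have hrs1' : 1 < rs := by
          rcases eq_or_lt_of_le hrs1 with h | h
          · exfalso
            rw [← h] at hφrs
            rw [hφinit] at hφrs
            linarith
          · exact h
        have hlt : ∀ u, 1 ≤ u → u < rs → 1 < φ u := by
          intro u hu hurs
          by_contra hc
          push_neg at hc
          exact (notMem_of_lt_csInf hurs hSbddb) ⟨hu, hc⟩
        have hEq : ∀ u ∈ Set.Ico 1 rs, φ u = ψ u := by
          intro u hu
          rcases eq_or_lt_of_le hu.1 with h | h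
          · rw [← h, hφinit, hψ1]
          · exact key u h (fun v hv hvu => hlt v hv.le (lt_of_le_of_lt hvu hu.2))
        have hφca : ContinuousAt φ rs :=
          (hφc.contDiffAt (Ici_mem_nhds hrs1')).continuousAt
        have hψca : ContinuousAt ψ rs := (hcd rs hrs1).continuousAt
        have hev : ∀ᶠ u in 𝓝[<] rs, φ u = ψ u := by
          filter_upwards [Ico_mem_nhdsLT_of_mem (⟨hrs1', le_refl rs⟩ : rs ∈ Set.Ioc 1 rs)]
            with u hu
          exact hEq u hu
        have t1 : Filter.Tendsto φ (𝓝[<] rs) (𝓝 (φ rs)) :=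
          hφca.continuousWithinAt.tendsto
        have t2 : Filter.Tendsto ψ (𝓝[<] rs) (𝓝 (ψ rs)) :=
          hψca.continuousWithinAt.tendsto
        have : φ rs = ψ rs := tendsto_nhds_unique (t1.congr' hev) t2
        have := hgt1 rs hrs1
        linarith [this, hφrs, ‹φ rs = ψ rs›]
    · intro r hr; exact ⟨(hgt1 r hr).le, hleβ r hr⟩
    · intro r hr
      have hg : 0 < gfun A B m (ψ r) := gfun_pos hB hAB hmne (hgt1 r hr)
      have hd := (hder r hr).hasDerivWithinAt.derivWithin (uniqueDiffOn_Ici 1 r hr)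
      rw [hd]
      have h1 : (0:ℝ) ≤ (gfun A B m (ψ r))⁻¹ * r⁻¹ :=
        mul_nonneg (inv_nonneg.2 hg.le) (inv_nonneg.2 (by linarith))
      rw [mul_neg]
      linarith
    · intro h; exact absurd hβ1 (by linarith)
    · intro _ r hr; exact ⟨hgt1 r hr.le, hltβ r hr⟩
end

section
/- Let 0 ≤ l < k ≤ n, a ∈ Γ⁺, m := m_{k,l}(a), and β ≥ 1. If ψ : [1,+∞) → ℝ is a continuously differentiable function with ψ(r) ≥ 1 for all r, ψ(1) = β, satisfying ψ(r)^k + ξ̄_k(a) r ψ(r)^{k−1}ψ′(r) − ψ(r)^l − ξ̲_l(a) r ψ(r)^{l−1}ψ′(r) = 0 for r > 1, then the first integral identity ψ(r)^{m·ξ̄_k(a)}·(1 − ψ(r)^{−(k−l)}) = β^{m·ξ̄_k(a)}·(1 − β^{−(k−l)})·r^{−m} holds for all r ≥ 1. -/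
open Finset Filter MeasureTheory Set

lemma aux_key_comb (n K : ℕ) (hK : 1 ≤ K) (a : Fin n → ℝ) :
    ∑ i : Fin n, a i * ∑ s ∈ powersetCard (K-1) ((univ : Finset (Fin n)).erase i), ∏ j ∈ s, a j
      = (K : ℝ) * ∑ t ∈ powersetCard K (univ : Finset (Fin n)), ∏ j ∈ t, a j := by
  classical
  have step2 : ∀ i : Fin n,
      ∑ t ∈ (powersetCard K (univ : Finset (Fin n))).filter (fun t => i ∈ t),
        a i * ∏ j ∈ t.erase i, a j
      = ∑ s ∈ powersetCard (K-1) ((univ : Finset (Fin n)).erase i), a i * ∏ j ∈ s, a j := by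
    intro i
    refine Finset.sum_nbij' (fun t => t.erase i) (fun s => insert i s) ?_ ?_ ?_ ?_ ?_
    · intro t ht
      obtain ⟨ht1, hti⟩ := Finset.mem_filter.1 ht
      obtain ⟨hsub, hc⟩ := Finset.mem_powersetCard.1 ht1
      refine Finset.mem_powersetCard.2 ⟨Finset.erase_subset_erase i hsub, ?_⟩
      rw [Finset.card_erase_of_mem hti, hc]
    · intro s hs
      obtain ⟨hsub, hc⟩ := Finset.mem_powersetCard.1 hs
      have hi : i ∉ s := fun h => (Finset.mem_erase.1 (hsub h)).1 rfl
      refine Finset.mem_filter.2 ⟨Finset.mem_powersetCard.2 ⟨Finset.subset_univ _, ?_⟩,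
        Finset.mem_insert_self _ _⟩
      rw [Finset.card_insert_of_notMem hi, hc]; omega
    · intro t ht
      exact Finset.insert_erase (Finset.mem_filter.1 ht).2
    · intro s hs
      obtain ⟨hsub, _⟩ := Finset.mem_powersetCard.1 hs
      exact Finset.erase_insert (fun h => (Finset.mem_erase.1 (hsub h)).1 rfl)
    · intro t ht; rfl
  calc ∑ i : Fin n, a i * ∑ s ∈ powersetCard (K-1) ((univ : Finset (Fin n)).erase i), ∏ j ∈ s, a j
      = ∑ i : Fin n, ∑ s ∈ powersetCard (K-1) ((univ : Finset (Fin n)).erase i),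
          a i * ∏ j ∈ s, a j := Finset.sum_congr rfl fun i _ => Finset.mul_sum _ _ _
    _ = ∑ i : Fin n, ∑ t ∈ (powersetCard K (univ : Finset (Fin n))).filter (fun t => i ∈ t),
          a i * ∏ j ∈ t.erase i, a j := Finset.sum_congr rfl fun i _ => (step2 i).symm
    _ = ∑ t ∈ powersetCard K (univ : Finset (Fin n)), ∑ i ∈ t, a i * ∏ j ∈ t.erase i, a j := by
        refine Finset.sum_comm' ?_
        intro i t
        simp only [Finset.mem_filter, Finset.mem_univ, true_and]
        tauto
    _ = ∑ t ∈ powersetCard K (univ : Finset (Fin n)), (K : ℝ) * ∏ j ∈ t, a j := by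
        refine Finset.sum_congr rfl fun t ht => ?_
        have hc := (Finset.mem_powersetCard.1 ht).2
        rw [Finset.sum_congr rfl (fun i hi => Finset.mul_prod_erase t a hi),
          Finset.sum_const, hc, nsmul_eq_mul]
    _ = (K : ℝ) * ∑ t ∈ powersetCard K (univ : Finset (Fin n)), ∏ j ∈ t, a j :=
        (Finset.mul_sum _ _ _).symm

lemma aux_esymm_pos (n : ℕ) (k : ℤ) (hk : 0 ≤ k) (hkn : k ≤ (n : ℤ)) (a : Fin n → ℝ)
    (ha : ∀ i, 0 < a i) : 0 < esymm n k a := by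
  rw [esymm, if_pos hk]
  refine Finset.sum_pos (fun s _ => Finset.prod_pos fun i _ => ha i) ?_
  refine Finset.powersetCard_nonempty.2 ?_
  simp only [Finset.card_univ, Fintype.card_fin]
  omega

lemma aux_esymmDel_nonneg (n : ℕ) (k : ℤ) (i : Fin n) (a : Fin n → ℝ)
    (ha : ∀ i, 0 < a i) : 0 ≤ esymmDel n k i a := by
  rw [esymmDel]
  split
  · exact Finset.sum_nonneg fun s _ => Finset.prod_nonneg fun j _ => (ha j).le
  · exact le_refl 0

lemma aux_sum_esymmDel (n : ℕ) (k : ℤ) (hk : 1 ≤ k) (a : Fin n → ℝ) :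
    ∑ i, a i * esymmDel n (k - 1) i a = (k : ℝ) * esymm n k a := by
  have h0 : (0:ℤ) ≤ k - 1 := by omega
  have h1 : (k - 1).toNat = k.toNat - 1 := by omega
  simp only [esymmDel, esymm, if_pos h0, if_pos (by omega : (0:ℤ) ≤ k), h1]
  rw [aux_key_comb n k.toNat (by omega) a]
  congr 1
  have := Int.toNat_of_nonneg (by omega : (0:ℤ) ≤ k)
  exact_mod_cast congrArg (Int.cast : ℤ → ℝ) this

lemma aux_Xi_val (n : ℕ) (k : ℤ) (hk : 0 ≤ k) (hkn : k ≤ (n : ℤ)) (a : Fin n → ℝ)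
    (ha : ∀ i, 0 < a i) :
    Xi n k a (fun i => (Real.sqrt (a i))⁻¹) = (k : ℝ) / n := by
  have hx : ∀ i, a i * ((Real.sqrt (a i))⁻¹) ^ 2 = 1 := fun i => by
    rw [inv_pow, Real.sq_sqrt (ha i).le, mul_inv_cancel₀ (ha i).ne']
  have hden : ∑ i, a i * ((Real.sqrt (a i))⁻¹) ^ 2 = (n : ℝ) := by
    rw [Finset.sum_congr rfl (fun i _ => hx i), Finset.sum_const, Finset.card_univ,
      Fintype.card_fin, nsmul_eq_mul, mul_one]
  have hnum : ∑ i, esymmDel n (k - 1) i a * a i ^ 2 * ((Real.sqrt (a i))⁻¹) ^ 2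
      = ∑ i, a i * esymmDel n (k - 1) i a := by
    refine Finset.sum_congr rfl fun i _ => ?_
    have h2 : a i ^ 2 * ((Real.sqrt (a i))⁻¹) ^ 2 = a i := by
      linear_combination (a i) * hx i
    rw [mul_assoc, h2]; ring
  rw [Xi, hden, hnum]
  rcases eq_or_lt_of_le hk with h0 | h1
  · subst h0
    have hz : ∀ i : Fin n, esymmDel n (-1) i a = 0 := fun i => by
      rw [esymmDel, if_neg (by norm_num)]
    simp [hz]
  · have hk1 : 1 ≤ k := h1
    rw [aux_sum_esymmDel n k hk1 a]
    have hσ := aux_esymm_pos n k hk hkn a ha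
    have hn : (0:ℝ) < n := by
      have h : (1:ℤ) ≤ (n:ℤ) := le_trans hk1 hkn
      exact_mod_cast lt_of_lt_of_le zero_lt_one h
    field_simp

lemma aux_x0_ne (n : ℕ) (hn : 0 < n) (a : Fin n → ℝ) (ha : ∀ i, 0 < a i) :
    (fun i : Fin n => (Real.sqrt (a i))⁻¹) ≠ 0 := by
  intro h
  have := congrFun h ⟨0, hn⟩
  simp only [Pi.zero_apply, inv_eq_zero] at this
  exact absurd this (ne_of_gt (Real.sqrt_pos.2 (ha _)))

lemma aux_T_pos (n : ℕ) (a : Fin n → ℝ) (ha : ∀ i, 0 < a i) (x : Fin n → ℝ) (hx : x ≠ 0) :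
    0 < ∑ i, a i * x i ^ 2 := by
  obtain ⟨i, hi⟩ := Function.ne_iff.1 hx
  refine Finset.sum_pos' (fun j _ => mul_nonneg (ha j).le (sq_nonneg _))
    ⟨i, Finset.mem_univ i, ?_⟩
  exact mul_pos (ha i) (lt_of_le_of_ne (sq_nonneg _) (Ne.symm (pow_ne_zero 2 hi)))

lemma aux_xiSup_ge (n : ℕ) (k : ℤ) (hk : 1 ≤ k) (hkn : k ≤ (n : ℤ)) (a : Fin n → ℝ)
    (ha : ∀ i, 0 < a i) : (k : ℝ) / n ≤ xiSup n k a := by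
  have hn : 0 < n := by omega
  refine le_csSup ?_ ⟨_, aux_x0_ne n hn a ha, aux_Xi_val n k (by omega) hkn a ha⟩
  refine ⟨(∑ i, esymmDel n (k - 1) i a * a i) / esymm n k a, ?_⟩
  rintro y ⟨x, hx, rfl⟩
  have hσ := aux_esymm_pos n k (by omega) hkn a ha
  have hT := aux_T_pos n a ha x hx
  rw [Xi, div_le_div_iff₀ (by positivity) hσ]
  have hN : ∑ i, esymmDel n (k - 1) i a * a i ^ 2 * x i ^ 2
      ≤ (∑ i, esymmDel n (k - 1) i a * a i) * (∑ j, a j * x j ^ 2) := by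
    rw [Finset.sum_mul]
    refine Finset.sum_le_sum fun i _ => ?_
    have h1 : a i * x i ^ 2 ≤ ∑ j, a j * x j ^ 2 :=
      Finset.single_le_sum (f := fun j => a j * x j ^ 2)
        (fun j _ => mul_nonneg (ha j).le (sq_nonneg _)) (Finset.mem_univ i)
    have hd := aux_esymmDel_nonneg n (k - 1) i a ha
    have hai := ha i
    calc esymmDel n (k - 1) i a * a i ^ 2 * x i ^ 2
        = (esymmDel n (k - 1) i a * a i) * (a i * x i ^ 2) := by ring
      _ ≤ (esymmDel n (k - 1) i a * a i) * (∑ j, a j * x j ^ 2) :=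
          mul_le_mul_of_nonneg_left h1 (mul_nonneg hd hai.le)
  calc (∑ i, esymmDel n (k - 1) i a * a i ^ 2 * x i ^ 2) * esymm n k a
      ≤ ((∑ i, esymmDel n (k - 1) i a * a i) * (∑ j, a j * x j ^ 2)) * esymm n k a :=
        mul_le_mul_of_nonneg_right hN hσ.le
    _ = (∑ i, esymmDel n (k - 1) i a * a i) * (esymm n k a * ∑ i, a i * x i ^ 2) := by ring

lemma aux_xiInf_le (n : ℕ) (l : ℤ) (hl : 0 ≤ l) (hln : l ≤ (n : ℤ)) (hn : 0 < n)
    (a : Fin n → ℝ) (ha : ∀ i, 0 < a i) : xiInf n l a ≤ (l : ℝ) / n := by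
  refine csInf_le ?_ ⟨_, aux_x0_ne n hn a ha, aux_Xi_val n l hl hln a ha⟩
  refine ⟨0, ?_⟩
  rintro y ⟨x, hx, rfl⟩
  rw [Xi]
  refine div_nonneg ?_ ?_
  · refine Finset.sum_nonneg fun i _ => ?_
    have hd := aux_esymmDel_nonneg n (l - 1) i a ha
    positivity
  · have hσ := aux_esymm_pos n l hl hln a ha
    have hT := aux_T_pos n a ha x hx
    positivity


/-- **First integral identity (3.6).** Any `C¹` solution `ψ ≥ 1` of the ODE
(3.1) with `ψ(1) = β` satisfies
`ψ(r)^{mξ̄_k}(1 - ψ(r)^{-(k-l)}) = β^{mξ̄_k}(1 - β^{-(k-l)}) r^{-m}` for all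
`r ≥ 1`, where `m = m_{k,l}(a)`. -/
theorem ode_first_integral
    (n : ℕ) (k l : ℤ) (hl : 0 ≤ l) (hlk : l < k) (hkn : k ≤ (n : ℤ))
    (a : Fin n → ℝ) (ha : ∀ i, 0 < a i)
    (β : ℝ) (hβ : 1 ≤ β) (ψ : ℝ → ℝ)
    (hψC1 : ContDiffOn ℝ 1 ψ (Set.Ici 1))
    (hψge : ∀ r : ℝ, 1 ≤ r → 1 ≤ ψ r) (hψ1 : ψ 1 = β)
    (hode : ∀ r : ℝ, 1 < r →
      ψ r ^ k + xiSup n k a * r * ψ r ^ (k - 1) * deriv ψ r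
        - ψ r ^ l - xiInf n l a * r * ψ r ^ (l - 1) * deriv ψ r = 0) :
    ∀ r : ℝ, 1 ≤ r →
      ψ r ^ (mkl n k l a * xiSup n k a) * (1 - ψ r ^ (-((k : ℝ) - (l : ℝ))))
        = β ^ (mkl n k l a * xiSup n k a) * (1 - β ^ (-((k : ℝ) - (l : ℝ))))
            * r ^ (-(mkl n k l a)) := by
  have hn : 0 < n := by omega
  have hnR : (0:ℝ) < n := by exact_mod_cast hn
  set ξS := xiSup n k a with hξS
  set ξI := xiInf n l a with hξI
  -- gap between xiSup and xiInf
  have hgap : ξI < ξS := by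
    have h1 : (l : ℝ) / n < (k : ℝ) / n := by
      apply div_lt_div_of_pos_right _ hnR
      exact_mod_cast hlk
    calc ξI ≤ (l : ℝ) / n := aux_xiInf_le n l hl (by omega) hn a ha
      _ < (k : ℝ) / n := h1
      _ ≤ ξS := aux_xiSup_ge n k (by omega) hkn a ha
  have hDne : ξS - ξI ≠ 0 := by linarith
  set m := mkl n k l a with hm
  have hmD : m * (ξS - ξI) = (k : ℝ) - (l : ℝ) := by
    rw [hm, mkl]; exact div_mul_cancel₀ _ hDne
  have hμν : m * ξS - m * ξI = (k : ℝ) - (l : ℝ) := by linarith [hmD]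
  -- the first-integral function
  set F : ℝ → ℝ := fun s => (ψ s ^ (m * ξS) - ψ s ^ (m * ξI)) * s ^ m with hF
  -- continuity of F on Ici 1
  have hψcont : ContinuousOn ψ (Set.Ici 1) := hψC1.continuousOn
  have hψne : ∀ x ∈ Set.Ici (1:ℝ), ψ x ≠ 0 :=
    fun x hx => by have := hψge x hx; linarith
  have hFcont : ContinuousOn F (Set.Ici 1) := by
    refine ((hψcont.rpow_const fun x hx => Or.inl (hψne x hx)).sub
      (hψcont.rpow_const fun x hx => Or.inl (hψne x hx))).mul
      (ContinuousOn.rpow_const continuousOn_id fun x hx => Or.inl ?_)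
    have h1 : (1:ℝ) ≤ x := hx
    show x ≠ 0
    intro h; rw [h] at h1; linarith
  -- derivative of F is zero on (1, ∞)
  have hderiv0 : ∀ r : ℝ, 1 < r → HasDerivAt F 0 r := by
    intro r hr
    have hr0 : (0:ℝ) < r := by linarith
    have hP0 : (0:ℝ) < ψ r := lt_of_lt_of_le one_pos (hψge r hr.le)
    have hψd : HasDerivAt ψ (deriv ψ r) r :=
      ((hψC1.differentiableOn one_ne_zero).differentiableAt (Ici_mem_nhds hr)).hasDerivAt
    have h1 : HasDerivAt (fun s => ψ s ^ (m * ξS))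
        (deriv ψ r * (m * ξS) * ψ r ^ (m * ξS - 1)) r :=
      hψd.rpow_const (Or.inl hP0.ne')
    have h2 : HasDerivAt (fun s => ψ s ^ (m * ξI))
        (deriv ψ r * (m * ξI) * ψ r ^ (m * ξI - 1)) r :=
      hψd.rpow_const (Or.inl hP0.ne')
    have h3 : HasDerivAt (fun s : ℝ => s ^ m) (m * r ^ (m - 1)) r :=
      Real.hasDerivAt_rpow_const (Or.inl hr0.ne')
    have hFd : HasDerivAt F
        ((deriv ψ r * (m * ξS) * ψ r ^ (m * ξS - 1)
            - deriv ψ r * (m * ξI) * ψ r ^ (m * ξI - 1)) * r ^ m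
          + (ψ r ^ (m * ξS) - ψ r ^ (m * ξI)) * (m * r ^ (m - 1))) r :=
      (h1.sub h2).mul h3
    convert hFd using 1
    -- rewrite the ODE in rpow form
    have hck : ψ r ^ ((k : ℝ)) = ψ r ^ k := Real.rpow_intCast (ψ r) k
    have hck1 : ψ r ^ ((k : ℝ) - 1) = ψ r ^ (k - 1) := by
      rw [show (k : ℝ) - 1 = ((k - 1 : ℤ) : ℝ) by push_cast; ring, Real.rpow_intCast]
    have hcl : ψ r ^ ((l : ℝ)) = ψ r ^ l := Real.rpow_intCast (ψ r) l
    have hcl1 : ψ r ^ ((l : ℝ) - 1) = ψ r ^ (l - 1) := by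
      rw [show (l : ℝ) - 1 = ((l - 1 : ℤ) : ℝ) by push_cast; ring, Real.rpow_intCast]
    have hE : ψ r ^ ((k : ℝ)) + ξS * r * ψ r ^ ((k : ℝ) - 1) * deriv ψ r
        - ψ r ^ ((l : ℝ)) - ξI * r * ψ r ^ ((l : ℝ) - 1) * deriv ψ r = 0 := by
      rw [hck, hck1, hcl, hcl1]; exact hode r hr
    -- factor out ψ r ^ (m ξS - k)
    have e1 : ψ r ^ (m * ξS) = ψ r ^ (m * ξS - (k : ℝ)) * ψ r ^ ((k : ℝ)) := by
      rw [← Real.rpow_add hP0]; congr 1; ring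
    have e2 : ψ r ^ (m * ξI) = ψ r ^ (m * ξS - (k : ℝ)) * ψ r ^ ((l : ℝ)) := by
      rw [← Real.rpow_add hP0]; congr 1; linarith
    have e3 : ψ r ^ (m * ξS - 1) = ψ r ^ (m * ξS - (k : ℝ)) * ψ r ^ ((k : ℝ) - 1) := by
      rw [← Real.rpow_add hP0]; congr 1; ring
    have e4 : ψ r ^ (m * ξI - 1) = ψ r ^ (m * ξS - (k : ℝ)) * ψ r ^ ((l : ℝ) - 1) := by
      rw [← Real.rpow_add hP0]; congr 1; linarith
    have e5 : r ^ m = r ^ (m - 1) * r := by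
      rw [← Real.rpow_add_one hr0.ne' (m - 1)]; congr 1; ring
    rw [e1, e2, e3, e4, e5]
    linear_combination (-(m * ψ r ^ (m * ξS - (k : ℝ)) * r ^ (m - 1))) * hE
  -- F is constant on [1, ∞)
  have hF1 : ∀ r : ℝ, 1 ≤ r → F r = F 1 := by
    intro r hr
    rcases eq_or_lt_of_le hr with h | hr1
    · rw [← h]
    · have key : ∀ s : ℝ, 1 < s → s ≤ r → F r = F s := by
        intro s hs hsr
        have hsub : Set.Icc s r ⊆ Set.Ici (1:ℝ) := fun x hx => le_trans hs.le hx.1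
        exact constant_of_has_deriv_right_zero (hFcont.mono hsub)
          (fun x hx => (hderiv0 x (lt_of_lt_of_le hs hx.1)).hasDerivWithinAt)
          r (Set.right_mem_Icc.2 hsr)
      have hmem : Tendsto F (nhdsWithin (1:ℝ) (Set.Ioi 1)) (nhds (F 1)) :=
        (hFcont 1 Set.self_mem_Ici).mono_left (nhdsWithin_mono 1 Set.Ioi_subset_Ici_self)
      have heq : ∀ᶠ s in nhdsWithin (1:ℝ) (Set.Ioi 1), F s = F r := by
        filter_upwards [Ioo_mem_nhdsGT_of_mem (Set.left_mem_Ico.2 hr1)] with s hs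
        exact (key s hs.1 hs.2.le).symm
      have hconst : Tendsto F (nhdsWithin (1:ℝ) (Set.Ioi 1)) (nhds (F r)) :=
        Tendsto.congr' (heq.mono fun s h => h.symm) tendsto_const_nhds
      exact tendsto_nhds_unique hconst hmem
  -- final algebra
  intro r hr
  have hr0 : (0:ℝ) < r := by linarith
  have hP0 : (0:ℝ) < ψ r := lt_of_lt_of_le one_pos (hψge r hr)
  have hβ0 : (0:ℝ) < β := by linarith
  have hFr := hF1 r hr
  have hFval : (ψ r ^ (m * ξS) - ψ r ^ (m * ξI)) * r ^ m
      = β ^ (m * ξS) - β ^ (m * ξI) := by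
    rw [hF] at hFr
    simpa [hψ1, Real.one_rpow] using hFr
  have l1 : ψ r ^ (m * ξS) * (1 - ψ r ^ (-((k : ℝ) - (l : ℝ))))
      = ψ r ^ (m * ξS) - ψ r ^ (m * ξI) := by
    rw [mul_sub, mul_one, ← Real.rpow_add hP0]
    congr 2
    linarith
  have l2 : β ^ (m * ξS) * (1 - β ^ (-((k : ℝ) - (l : ℝ))))
      = β ^ (m * ξS) - β ^ (m * ξI) := by
    rw [mul_sub, mul_one, ← Real.rpow_add hβ0]
    congr 2
    linarith
  have hrm : (0:ℝ) < r ^ m := Real.rpow_pos_of_pos hr0 m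
  rw [l1, l2, Real.rpow_neg hr0.le]
  field_simp
  linarith [hFval]
end
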